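/- arXiv:1512.01842 — 3 statements merged into one kernel-verified Lean document; each statement's English description precedes it below -/
import Mathlib

section
/- For every A ∈ SL(2,ℝ) and every natural number n, the translation length satisfies ℓ(Aⁿ) = n·ℓ(A), where ℓ(A) = inf_{z∈ℍ} dist(A·z, z). -/
open scoped UpperHalfPlane MatrixGroups

/-- The translation length of `A ∈ SL(2,ℝ)` acting on the hyperbolic plane:
`ℓ(A) = inf_{z ∈ ℍ} dist (A • z) z`. -/
noncomputable def translationLength (A : SL(2, ℝ)) : ℝ :=
  ⨅ z : ℍ, dist (A • z) z

/-!
For `A = [[a, b], [c, d]]` and `z = x + iy ∈ ℍ` one has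
`sinh (dist (A • z) z / 2) = |c z² + (d - a) z - b| / (2y)`, and the squared modulus of a real
quadratic `p z² + q z + r` is `Δ y² + (p |z|² + q x + r)²` with `Δ` its discriminant, here
`Δ = tr(A)² - 4`. Choosing `z` suitably brings `(p |z|² + q x + r)² / y²` arbitrarily close to
`max (-Δ) 0`, so
`sinh (ℓ(A) / 2) = √(max Δ 0) / 2`: thus `ℓ(A) = 0` if `|tr A| ≤ 2` and `ℓ(A) = 2s` if
`|tr A| = 2 cosh s`. By Cayley–Hamilton `tr(Aⁿ) = Cₙ(tr A)` for the rescaled Chebyshev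
polynomials, and `Cₙ(2 cos θ) = 2 cos nθ`, `Cₙ(2 cosh s) = 2 cosh ns`, whence `ℓ(Aⁿ) = n ℓ(A)`.
-/

open UpperHalfPlane Real

lemma Complex.normSq_quadratic (p q r : ℝ) (z : ℂ) :
    Complex.normSq (p * z ^ 2 + q * z + r) =
      discrim p q r * z.im ^ 2 + (p * Complex.normSq z + q * z.re + r) ^ 2 := by
  simp only [discrim, Complex.normSq_apply, Complex.add_re, Complex.add_im, Complex.mul_re,
    Complex.mul_im, Complex.ofReal_re, Complex.ofReal_im, pow_two]
  ring

lemma exists_sq_lt_max_neg_discrim_mul_sq (p q r : ℝ) {ε : ℝ} (hε : 0 < ε) :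
    ∃ x y : ℝ, 0 < y ∧
      (p * (x ^ 2 + y ^ 2) + q * x + r) ^ 2 < (max (-discrim p q r) 0 + ε) * y ^ 2 := by
  set Δ := discrim p q r with hΔ
  rcases eq_or_ne p 0 with rfl | hp
  · have hΔ0 : max (-Δ) 0 = 0 := max_eq_right (by simpa [hΔ, discrim] using sq_nonneg q)
    rw [hΔ0, zero_add]
    rcases eq_or_ne q 0 with rfl | hq
    · refine ⟨0, (|r| + 1) / √ε, by positivity, ?_⟩
      have hsε : 0 < √ε := Real.sqrt_pos.mpr hε
      calc (0 * (0 ^ 2 + ((|r| + 1) / √ε) ^ 2) + 0 * 0 + r) ^ 2 = |r| ^ 2 := by simp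
        _ < (|r| + 1) ^ 2 := by gcongr; linarith
        _ = ε * ((|r| + 1) / √ε) ^ 2 := by
          rw [div_pow, Real.sq_sqrt hε.le]; field_simp
    · exact ⟨-r / q, 1, one_pos, by simp [hq, hε, mul_div_cancel₀]⟩
  -- At the vertex `x = -q / (2p)` the expression equals `p y² - Δ / (4p)`.
  · refine ⟨-q / (2 * p), √(|Δ| + ε) / (2 * |p|), by positivity, ?_⟩
    have hy : (√(|Δ| + ε) / (2 * |p|)) ^ 2 = (|Δ| + ε) / (4 * p ^ 2) := by
      rw [div_pow, Real.sq_sqrt (by positivity), mul_pow, sq_abs]; norm_num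
    have hR : p * ((-q / (2 * p)) ^ 2 + (√(|Δ| + ε) / (2 * |p|)) ^ 2) + q * (-q / (2 * p)) + r
        = (|Δ| - Δ + ε) / (4 * p) := by
      rw [hy, hΔ, discrim]; field_simp; ring
    rw [hR, hy, div_pow, div_lt_iff₀ (by positivity)]
    rcases le_or_gt 0 Δ with h | h
    · rw [abs_of_nonneg h, max_eq_right (by linarith)]
      field_simp
      nlinarith
    · rw [abs_of_neg h, max_eq_left (by linarith)]
      field_simp
      nlinarith

namespace UpperHalfPlane

lemma exists_normSq_quadratic_lt (p q r : ℝ) {ε : ℝ} (hε : 0 < ε) :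
    ∃ z : ℍ, Complex.normSq (p * z ^ 2 + q * z + r) < (max (discrim p q r) 0 + ε) * z.im ^ 2 := by
  obtain ⟨x, y, hy, h⟩ := exists_sq_lt_max_neg_discrim_mul_sq p q r hε
  refine ⟨mk ⟨x, y⟩ hy, ?_⟩
  have hmax : max (discrim p q r) 0 = discrim p q r + max (-discrim p q r) 0 := by
    rcases le_total 0 (discrim p q r) with h | h
    · rw [max_eq_left h, max_eq_right (by linarith), add_zero]
    · rw [max_eq_right h, max_eq_left (by linarith), add_neg_cancel]
  rw [Complex.normSq_quadratic, hmax]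
  simp only [mk_im, Complex.normSq_mk]
  linarith

lemma iInf_norm_quadratic_div_two_im (p q r : ℝ) :
    ⨅ z : ℍ, ‖(p * z ^ 2 + q * z + r : ℂ)‖ / (2 * z.im) = √(max (discrim p q r) 0) / 2 := by
  refine ciInf_eq_of_forall_ge_of_forall_gt_exists_lt (fun z => ?_) (fun w hw => ?_)
  · have hy := z.im_pos
    have hle : max (discrim p q r) 0 * z.im ^ 2 ≤ Complex.normSq (p * z ^ 2 + q * z + r) := by
      rcases le_total 0 (discrim p q r) with h | h
      · rw [max_eq_left h, Complex.normSq_quadratic, coe_im]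
        exact le_add_of_nonneg_right (sq_nonneg _)
      · rw [max_eq_right h, zero_mul]
        exact Complex.normSq_nonneg _
    rw [div_le_div_iff₀ two_pos (by positivity), Complex.norm_def]
    calc √(max (discrim p q r) 0) * (2 * z.im) = 2 * √(max (discrim p q r) 0 * z.im ^ 2) := by
          rw [Real.sqrt_mul (le_max_right _ _), Real.sqrt_sq hy.le]; ring
      _ ≤ _ := by rw [mul_comm]; gcongr
  · have hw0 : 0 < w := lt_of_le_of_lt (by positivity) hw
    have hε : 0 < (2 * w) ^ 2 - max (discrim p q r) 0 := by
      rw [sub_pos, ← Real.sqrt_lt' (by positivity)]; linarith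
    obtain ⟨z, hz⟩ := exists_normSq_quadratic_lt p q r hε
    have hy := z.im_pos
    refine ⟨z, ?_⟩
    rw [div_lt_iff₀ (by positivity), Complex.norm_def, Real.sqrt_lt' (by positivity)]
    linarith

lemma dist_smul_self (A : SL(2, ℝ)) (z : ℍ) :
    dist (A • z) z = 2 * arsinh
      (‖((A 1 0 : ℝ) * z ^ 2 + (A 1 1 - A 0 0 : ℝ) * z + (-A 0 1 : ℝ) : ℂ)‖ / (2 * z.im)) := by
  set g := Matrix.SpecialLinearGroup.mapGL ℝ A
  have hsmul : A • z = g • z := rfl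
  have hden : denom g z = (A 1 0 : ℂ) * z + (A 1 1 : ℂ) := by simp [g, denom]
  have hcoe : ((A • z : ℍ) : ℂ) = ((A 0 0 : ℂ) * z + (A 0 1 : ℂ)) / denom g z := by
    simpa [hden] using coe_specialLinearGroup_apply A z
  have him : (A • z).im = z.im / ‖denom g z‖ ^ 2 := by
    simpa [g, hsmul, Complex.normSq_eq_norm_sq] using im_smul_eq_div_normSq g z
  have hnum : (A 0 0 : ℂ) * z + (A 0 1 : ℂ) - denom g z * z =
      -((A 1 0 : ℝ) * z ^ 2 + (A 1 1 - A 0 0 : ℝ) * z + (-A 0 1 : ℝ) : ℂ) := by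
    rw [hden]; push_cast; ring
  have hy := z.im_pos
  have hD : 0 < ‖denom g z‖ := norm_pos_iff.mpr (denom_ne_zero g z)
  rw [dist_eq, him, Complex.dist_eq, hcoe, div_sub' (denom_ne_zero g z), hnum, norm_div,
    norm_neg, div_mul_eq_mul_div, ← sq, Real.sqrt_div (sq_nonneg _), Real.sqrt_sq hy.le,
    Real.sqrt_sq hD.le]
  field_simp

end UpperHalfPlane

theorem translationLength_eq_two_mul_arsinh (A : SL(2, ℝ)) :
    translationLength A =
      2 * arsinh (√(max ((A : Matrix (Fin 2) (Fin 2) ℝ).trace ^ 2 - 4) 0) / 2) := by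
  have hdisc : discrim (A 1 0) (A 1 1 - A 0 0) (-A 0 1) =
      (A : Matrix (Fin 2) (Fin 2) ℝ).trace ^ 2 - 4 := by
    have hdet := A.det_coe
    rw [Matrix.det_fin_two] at hdet
    rw [Matrix.trace_fin_two, discrim]
    linear_combination (-4 : ℝ) * hdet
  have hmono : Monotone fun x => 2 * arsinh x := arsinh_strictMono.monotone.const_mul zero_le_two
  rw [translationLength, funext (dist_smul_self A),
    ← hmono.map_ciInf_of_continuousAt (by fun_prop) ?_, iInf_norm_quadratic_div_two_im, hdisc]
  exact ⟨0, by rintro _ ⟨z, rfl⟩; have := z.im_pos; positivity⟩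

lemma translationLength_eq_zero_of_abs_trace_le_two {A : SL(2, ℝ)}
    (h : |(A : Matrix (Fin 2) (Fin 2) ℝ).trace| ≤ 2) : translationLength A = 0 := by
  rw [translationLength_eq_two_mul_arsinh, max_eq_right, Real.sqrt_zero, zero_div, arsinh_zero,
    mul_zero]
  nlinarith [abs_le.mp h]

lemma translationLength_eq_of_abs_trace_eq_two_mul_cosh {A : SL(2, ℝ)} {s : ℝ} (hs : 0 ≤ s)
    (h : |(A : Matrix (Fin 2) (Fin 2) ℝ).trace| = 2 * cosh s) : translationLength A = 2 * s := by
  have hsq : (A : Matrix (Fin 2) (Fin 2) ℝ).trace ^ 2 - 4 = (2 * sinh s) ^ 2 := by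
    rw [← sq_abs, h]; linear_combination 4 * cosh_sq s
  rw [translationLength_eq_two_mul_arsinh, hsq, max_eq_left (sq_nonneg _),
    Real.sqrt_sq (by simpa using hs), mul_div_cancel_left₀ _ two_ne_zero, arsinh_sinh]

namespace Polynomial.Chebyshev

theorem C_eval_neg {R : Type*} [CommRing R] (n : ℤ) (x : R) :
    (C R n).eval (-x) = n.negOnePow * (C R n).eval x := by
  induction n using Chebyshev.induct' with
  | zero => simp
  | one => simp
  | add_two n ih1 ih2 =>
    simp only [C_add_two, eval_sub, eval_mul, eval_X, ih1, ih2, Int.negOnePow_add,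
      Int.negOnePow_one, Int.negOnePow_even 2 even_two]
    push_cast
    ring
  | neg n ih => simp [ih]

theorem abs_eval_C_abs (n : ℤ) (x : ℝ) : |(C ℝ n).eval (|x|)| = |(C ℝ n).eval x| := by
  rcases abs_choice x with h | h <;> rw [h]
  simp [C_eval_neg, abs_mul]

end Polynomial.Chebyshev

theorem Matrix.trace_pow_eq_eval_chebyshevC {R : Type*} [CommRing R]
    {M : Matrix (Fin 2) (Fin 2) R} (hM : M.det = 1) (n : ℕ) :
    (M ^ n).trace = (Polynomial.Chebyshev.C R n).eval M.trace := by
  have hCH : M ^ 2 = M.trace • M - M.det • 1 := by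
    ext i j
    fin_cases i <;> fin_cases j <;>
      simp [sq, Matrix.mul_apply, Fin.sum_univ_two, Matrix.det_fin_two, Matrix.trace_fin_two] <;> ring
  rw [hM, one_smul] at hCH
  induction n using Nat.twoStepInduction with
  | zero => simp [Matrix.trace_fin_two]
  | one => simp
  | more n ih0 ih1 =>
    rw [pow_add, hCH, Matrix.mul_sub, Matrix.mul_smul, ← pow_succ, Matrix.mul_one,
      Matrix.trace_sub, Matrix.trace_smul, ih0, ih1]
    push_cast
    simp [Polynomial.Chebyshev.C_add_two]

/-- For every `A ∈ SL(2,ℝ)` and every natural number `n`,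
`ℓ(Aⁿ) = n · ℓ(A)`. -/
theorem translationLength_pow (A : SL(2, ℝ)) (n : ℕ) :
    translationLength (A ^ n) = (n : ℝ) * translationLength A := by
  set t := (A : Matrix (Fin 2) (Fin 2) ℝ).trace
  have htr : ((A ^ n : SL(2, ℝ)) : Matrix (Fin 2) (Fin 2) ℝ).trace =
      (Polynomial.Chebyshev.C ℝ n).eval t := by
    rw [Matrix.SpecialLinearGroup.coe_pow, Matrix.trace_pow_eq_eval_chebyshevC A.det_coe]
  rcases le_or_gt |t| 2 with hell | hhyp
  · obtain ⟨hlo, hhi⟩ := abs_le.mp hell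
    obtain ⟨θ, hθ⟩ : ∃ θ, t = 2 * cos θ :=
      ⟨arccos (t / 2), by rw [cos_arccos (by linarith) (by linarith)]; ring⟩
    rw [translationLength_eq_zero_of_abs_trace_le_two hell, mul_zero,
      translationLength_eq_zero_of_abs_trace_le_two]
    rw [htr, hθ, Polynomial.Chebyshev.C_two_mul_real_cos, abs_mul, abs_two]
    linarith [abs_cos_le_one ((n : ℤ) * θ)]
  · set s := arcosh (|t| / 2)
    have hs : 0 ≤ s := arcosh_nonneg (by linarith)
    have hcosh : |t| = 2 * cosh s := by rw [cosh_arcosh (by linarith)]; ring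
    rw [translationLength_eq_of_abs_trace_eq_two_mul_cosh hs hcosh,
      translationLength_eq_of_abs_trace_eq_two_mul_cosh (mul_nonneg n.cast_nonneg hs)]
    · ring
    rw [htr, ← Polynomial.Chebyshev.abs_eval_C_abs, hcosh,
      Polynomial.Chebyshev.C_two_mul_real_cosh, abs_of_pos (by positivity)]
    push_cast
    ring
end

section
/- Let X be a nonempty compact Hausdorff topological space, let H be a closed linear subspace of the Banach space C(X,ℝ) of continuous real-valued functions on X with the supremum norm, and let κ ∈ C(X,ℝ). Assume that every nonzero finite regular Borel measure μ on X with ∫ h dμ = 0 for all h ∈ H satisfies ∫ κ dμ < 0. Then there exists h ∈ H such that κ(x) − h(x) < 0 for every x ∈ X. -/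
/-!
If `κ - h` takes a nonnegative value for every `h ∈ H`, then `κ` lies outside the open convex set
`N + H`, where `N` is the cone of everywhere-negative functions. Hahn–Banach separates `κ` from it by
a continuous functional `φ`; since `N + H` is stable under adding `H` and under positive scaling of
`N`, the functional `φ` vanishes on `H`, is positive, and satisfies `φ κ ≥ 0`. The
Riesz–Markov–Kakutani theorem turns `φ` into a nonzero finite regular measure annihilating `H`
with `∫ κ dμ = φ κ ≥ 0`, contradicting the hypothesis.
-/

open MeasureTheory Set
open scoped Pointwise CompactlySupported

theorem nonpos_of_forall_pos_mul_lt {a b : ℝ} (h : ∀ t > 0, t * a < b) : a ≤ 0 := by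
  by_contra! ha
  have := h ((|b| + 1) / a) (by positivity)
  rw [div_mul_cancel₀ _ ha.ne'] at this
  linarith [le_abs_self b]

theorem nonneg_of_forall_pos_mul_lt {a b : ℝ} (h : ∀ t > 0, t * a < b) : 0 ≤ b := by
  by_contra! hb
  have ha : a < 0 := by simpa using (h 1 one_pos).trans hb
  have := h (b / a) (div_pos_of_neg_of_neg hb ha)
  rw [div_mul_cancel₀ _ ha.ne] at this
  exact this.false

namespace ContinuousMap

variable {X : Type*} [TopologicalSpace X]

theorem isOpen_setOf_forall_neg [CompactSpace X] : IsOpen {f : C(X, ℝ) | ∀ x, f x < 0} := by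
  simpa [MapsTo] using isOpen_setOfPred_mapsTo (X := X) isCompact_univ (isOpen_Iio (a := (0 : ℝ)))

theorem convex_setOf_forall_neg : Convex ℝ {f : C(X, ℝ) | ∀ x, f x < 0} :=
  fun _ hf _ hg _ _ ha hb hab x => convex_Iio (0 : ℝ) (hf x) (hg x) ha hb hab

end ContinuousMap

theorem exists_positive_annihilator_of_notMem_neg_add {X : Type*} [TopologicalSpace X]
    [CompactSpace X] {H : Submodule ℝ C(X, ℝ)} {κ : C(X, ℝ)}
    (hκ : κ ∉ {f : C(X, ℝ) | ∀ x, f x < 0} + (H : Set C(X, ℝ))) :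
    ∃ φ : StrongDual ℝ C(X, ℝ), φ ≠ 0 ∧ (∀ f, 0 ≤ f → 0 ≤ φ f) ∧ (∀ h ∈ H, φ h = 0) ∧
      0 ≤ φ κ := by
  obtain ⟨φ, hφ⟩ := geometric_hahn_banach_open_point
    (ContinuousMap.convex_setOf_forall_neg.add H.convex)
    (ContinuousMap.isOpen_setOf_forall_neg.add_right) hκ
  have hmem {n h : C(X, ℝ)} (hn : ∀ x, n x < 0) (hh : h ∈ H) : φ n + φ h < φ κ := by
    simpa using hφ _ (add_mem_add (s := {f : C(X, ℝ) | ∀ x, f x < 0}) hn hh)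
  have neg_one : ∀ x, (-1 : C(X, ℝ)) x < 0 := fun x => by simp
  have neg_smul_sub_one {f : C(X, ℝ)} (hf : 0 ≤ f) {t : ℝ} (ht : 0 < t) :
      ∀ x, (-(t • f) - 1) x < 0 := fun x => by
    have : 0 ≤ f x := hf x
    simp only [ContinuousMap.sub_apply, ContinuousMap.neg_apply, ContinuousMap.smul_apply,
      smul_eq_mul, ContinuousMap.one_apply]
    nlinarith
  refine ⟨φ, ?_, fun f hf => ?_, fun h hh => ?_, ?_⟩
  · rintro rfl
    simpa using hmem neg_one (zero_mem H)
  · refine neg_nonpos.1 (nonpos_of_forall_pos_mul_lt (b := φ κ + φ 1) fun t ht => ?_)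
    have := hmem (neg_smul_sub_one hf ht) (zero_mem H)
    simp only [map_sub, map_neg, map_smul, smul_eq_mul, map_zero] at this
    linarith
  · have bound (g : C(X, ℝ)) (hg : g ∈ H) : φ g ≤ 0 :=
      nonpos_of_forall_pos_mul_lt (b := φ κ + φ 1) fun t ht => by
        have := hmem neg_one (H.smul_mem t hg)
        simp only [map_neg, map_smul, smul_eq_mul] at this
        linarith
    linarith [bound h hh, bound (-h) (neg_mem hh), φ.map_neg h]
  · refine nonneg_of_forall_pos_mul_lt (a := -φ 1) fun t ht => ?_
    have hneg : ∀ x, (-(t • 1) : C(X, ℝ)) x < 0 := fun x => by simpa using ht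
    simpa using hmem hneg (zero_mem H)

theorem exists_regular_integral_eq_of_nonneg {X : Type*} [TopologicalSpace X] [CompactSpace X]
    [T2Space X] [MeasurableSpace X] [BorelSpace X] (φ : C(X, ℝ) →ₗ[ℝ] ℝ)
    (hφ : ∀ f, 0 ≤ f → 0 ≤ φ f) :
    ∃ μ : Measure X, IsFiniteMeasure μ ∧ μ.Regular ∧ ∀ f : C(X, ℝ), ∫ x, f x ∂μ = φ f := by
  let Λ : C_c(X, ℝ) →ₚ[ℝ] ℝ := .mk₀
    { toFun g := φ g
      map_add' f g := φ.map_add f g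
      map_smul' c f := φ.map_smul c f }
    fun f hf => hφ f hf
  exact ⟨RealRMK.rieszMeasure Λ, inferInstance, inferInstance, fun f =>
    RealRMK.integral_rieszMeasure Λ (CompactlySupportedContinuousMap.continuousMapEquiv f)⟩

theorem exists_sub_neg_of_forall_measure_general
    {X : Type*} [TopologicalSpace X] [CompactSpace X] [T2Space X]
    [MeasurableSpace X] [BorelSpace X]
    (H : Submodule ℝ C(X, ℝ))
    (κ : C(X, ℝ))
    (hyp : ∀ μ : Measure X, IsFiniteMeasure μ → μ.Regular → μ ≠ 0 →
      (∀ h ∈ H, ∫ x, h x ∂μ = 0) → ∫ x, κ x ∂μ < 0) :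
    ∃ h ∈ H, ∀ x, κ x - h x < 0 := by
  by_contra hcon
  have hκ : κ ∉ {f : C(X, ℝ) | ∀ x, f x < 0} + (H : Set C(X, ℝ)) := by
    rintro ⟨n, hn, h, hh, rfl⟩
    exact hcon ⟨h, hh, fun x => by simpa using hn x⟩
  obtain ⟨φ, hφ0, hφpos, hφH, hφκ⟩ := exists_positive_annihilator_of_notMem_neg_add hκ
  obtain ⟨μ, hfin, hreg, hμ⟩ := exists_regular_integral_eq_of_nonneg φ.toLinearMap hφpos
  have hμ0 : μ ≠ 0 := by
    rintro rfl
    exact hφ0 (ContinuousLinearMap.ext fun f => by simpa using (hμ f).symm)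
  have hκμ := hyp μ hfin hreg hμ0 fun h hh => (hμ h).trans (hφH h hh)
  exact (hμ κ ▸ hκμ).not_ge hφκ

/-- Let `X` be a nonempty compact Hausdorff space, `H` a closed linear subspace of the Banach
space `C(X,ℝ)` (with the supremum norm), and `κ ∈ C(X,ℝ)`. If every nonzero finite regular
Borel measure `μ` on `X` with `∫ h dμ = 0` for all `h ∈ H` satisfies `∫ κ dμ < 0`, then there
exists `h ∈ H` with `κ(x) - h(x) < 0` for every `x ∈ X`. -/
theorem exists_sub_neg_of_forall_measure
    {X : Type*} [TopologicalSpace X] [CompactSpace X] [T2Space X] [Nonempty X]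
    [MeasurableSpace X] [BorelSpace X]
    (H : Submodule ℝ C(X, ℝ)) (hH : IsClosed (H : Set C(X, ℝ)))
    (κ : C(X, ℝ))
    (hyp : ∀ μ : Measure X, IsFiniteMeasure μ → μ.Regular → μ ≠ 0 →
      (∀ h ∈ H, ∫ x, h x ∂μ = 0) → ∫ x, κ x ∂μ < 0) :
    ∃ h ∈ H, ∀ x, κ x - h x < 0 :=
  exists_sub_neg_of_forall_measure_general H κ hyp
end

section
/- Let X be a nonempty compact metric space, T : X → X a continuous map, g : X → ℝ a continuous function, and x ∈ X. If limsup_{n→∞} (1/n) Σ_{i=0}^{n-1} g(Tⁱx) ≥ 0, then there exists a T-invariant Borel probability measure μ on X with ∫ g dμ ≥ 0. -/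
/-!
The Birkhoff averages of `g` along the orbit of `x` are the integrals of `g` against the
empirical measures `n⁻¹ ∑_{i<n} δ_{Tⁱx}`. Choose an ultrafilter on `ℕ`, finer than `atTop`, along
which these averages converge to the limsup. The empirical measures have mass at most one, so by
compactness of such measures in the weak topology they converge along the ultrafilter to some
`μ`, and `∫ g dμ` is the limsup. Testing against `f ∘ T - f` shows that `μ` is `T`-invariant,
since the Birkhoff averages of `f ∘ T - f` telescope to `(f (Tⁿx) - f x) / n`.
-/

open MeasureTheory Filter Topology
open scoped NNReal BoundedContinuousFunction

theorem norm_birkhoffAverage_le {𝕜 α E : Type*} [RCLike 𝕜] [NormedAddCommGroup E]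
    [NormedSpace 𝕜 E] {f : α → α} {g : α → E} {C : ℝ} (hg : ∀ y, ‖g y‖ ≤ C) (n : ℕ) (x : α) :
    ‖birkhoffAverage 𝕜 f g n x‖ ≤ C := by
  rcases Nat.eq_zero_or_pos n with rfl | hn
  · simpa using (norm_nonneg _).trans (hg x)
  have hsum : ‖birkhoffSum f g n x‖ ≤ n * C := by
    simpa [birkhoffSum] using norm_sum_le_of_le (Finset.range n) fun k _ ↦ hg (f^[k] x)
  rw [birkhoffAverage, norm_smul, norm_inv, RCLike.norm_natCast]
  calc (n : ℝ)⁻¹ * ‖birkhoffSum f g n x‖ ≤ (n : ℝ)⁻¹ * (n * C) := by gcongr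
    _ = C := by field_simp

theorem birkhoffSum_comp {α G : Type*} [AddCommMonoid G] (f : α → α) (g : α → G) (n : ℕ)
    (x : α) : birkhoffSum f (g ∘ f) n x = birkhoffSum f g n (f x) := by
  simp only [birkhoffSum, Function.comp_apply, ← Function.iterate_succ_apply',
    Function.iterate_succ_apply]

section EmpiricalMeasure

variable {X : Type*} [MeasurableSpace X]

noncomputable def empiricalMeasure (T : X → X) (x : X) (n : ℕ) : FiniteMeasure X :=
  ⟨(n : ℝ≥0)⁻¹ • ∑ i ∈ Finset.range n, Measure.dirac (T^[i] x), inferInstance⟩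

theorem integral_empiricalMeasure [MeasurableSingletonClass X] {E : Type*} [NormedAddCommGroup E]
    [NormedSpace ℝ E] [CompleteSpace E] (T : X → X) (x : X) (f : X → E) (n : ℕ) :
    ∫ y, f y ∂(empiricalMeasure T x n : Measure X) = birkhoffAverage ℝ T f n x := by
  rw [empiricalMeasure, FiniteMeasure.toMeasure_mk, integral_smul_nnreal_measure,
    integral_finsetSum_measure fun i _ ↦ integrable_dirac enorm_lt_top]
  simp [integral_dirac, birkhoffAverage, birkhoffSum, NNReal.smul_def]

theorem mass_empiricalMeasure_le_one (T : X → X) (x : X) (n : ℕ) :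
    (empiricalMeasure T x n).mass ≤ 1 := by
  simpa [FiniteMeasure.mass, empiricalMeasure] using inv_mul_le_one

theorem exists_tendsto_empiricalMeasure [TopologicalSpace X] [T2Space X] [BorelSpace X]
    [CompactSpace X] (T : X → X) (x : X) (U : Ultrafilter ℕ) :
    ∃ μ : FiniteMeasure X, Tendsto (empiricalMeasure T x) U (𝓝 μ) := by
  obtain ⟨μ, -, hμ⟩ :=
    (isCompact_setOfPred_finiteMeasure_le_of_compactSpace X 1).ultrafilter_le_nhds
      (U.map (empiricalMeasure T x))
      (le_principal_iff.2 (mem_map.2 (Eventually.of_forall (mass_empiricalMeasure_le_one T x))))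
  exact ⟨μ, hμ⟩

variable [TopologicalSpace X] [OpensMeasurableSpace X] [MeasurableSingletonClass X]
  {T : X → X} {x : X} {l : Filter ℕ} {μ : FiniteMeasure X}

theorem tendsto_birkhoffAverage_of_tendsto_empiricalMeasure
    (hμ : Tendsto (empiricalMeasure T x) l (𝓝 μ)) (f : X →ᵇ ℝ) :
    Tendsto (fun n ↦ birkhoffAverage ℝ T f n x) l (𝓝 (∫ y, f y ∂(μ : Measure X))) := by
  simpa only [integral_empiricalMeasure] using
    FiniteMeasure.tendsto_iff_forall_integral_tendsto.1 hμ f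

theorem isProbabilityMeasure_of_tendsto_empiricalMeasure [l.NeBot] (hl : l ≤ atTop)
    (hμ : Tendsto (empiricalMeasure T x) l (𝓝 μ)) : IsProbabilityMeasure (μ : Measure X) := by
  have hone : ∀ᶠ n in l, birkhoffAverage ℝ T (1 : X →ᵇ ℝ) n x = 1 :=
    ((eventually_ne_atTop 0).filter_mono hl).mono fun n hn ↦ by
      rw [birkhoffAverage_of_comp_eq ℝ rfl (Nat.cast_ne_zero.2 hn)]; rfl
  have hmass := tendsto_nhds_unique (tendsto_birkhoffAverage_of_tendsto_empiricalMeasure hμ 1)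
    (tendsto_const_nhds.congr' (hone.mono fun _ h ↦ h.symm))
  simp only [BoundedContinuousFunction.coe_one, Pi.one_apply, integral_const,
    FiniteMeasure.measureReal_eq_coe_coeFn, smul_eq_mul, mul_one, NNReal.coe_eq_one] at hmass
  constructor
  rw [← FiniteMeasure.ennreal_coeFn_eq_coeFn_toMeasure]
  exact_mod_cast hmass

theorem map_eq_of_tendsto_empiricalMeasure [HasOuterApproxClosed X] [BorelSpace X] [l.NeBot]
    (hT : Continuous T) (hl : l ≤ atTop) (hμ : Tendsto (empiricalMeasure T x) l (𝓝 μ)) :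
    (μ : Measure X).map T = μ := by
  refine ext_of_forall_integral_eq_of_IsFiniteMeasure fun f ↦ ?_
  rw [integral_map hT.aemeasurable f.continuous.aestronglyMeasurable]
  set fT := f.compContinuous ⟨T, hT⟩
  have htelescope : Tendsto (fun n ↦ birkhoffAverage ℝ T (fT - f : X →ᵇ ℝ) n x) l (𝓝 0) := by
    refine ((tendsto_birkhoffAverage_apply_sub_birkhoffAverage' ℝ f.isBounded_range T x).mono_left
      hl).congr fun n ↦ ?_
    rw [BoundedContinuousFunction.coe_sub, birkhoffAverage_sub]
    simp [birkhoffAverage, fT, birkhoffSum_comp]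
  have hzero := tendsto_nhds_unique
    (tendsto_birkhoffAverage_of_tendsto_empiricalMeasure hμ (fT - f)) htelescope
  simp only [BoundedContinuousFunction.coe_sub, Pi.sub_apply] at hzero
  rwa [integral_sub (fT.integrable _) (f.integrable _), sub_eq_zero] at hzero

end EmpiricalMeasure

theorem exists_invariant_measure_tendsto_birkhoffAverage {X : Type*} [TopologicalSpace X]
    [T2Space X] [HasOuterApproxClosed X] [CompactSpace X] [MeasurableSpace X] [BorelSpace X]
    {T : X → X} (hT : Continuous T) (x : X) {U : Ultrafilter ℕ} (hU : (U : Filter ℕ) ≤ atTop) :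
    ∃ μ : Measure X, IsProbabilityMeasure μ ∧ μ.map T = μ ∧ ∀ f : X →ᵇ ℝ,
      Tendsto (fun n ↦ birkhoffAverage ℝ T f n x) (U : Filter ℕ) (𝓝 (∫ y, f y ∂μ)) := by
  obtain ⟨μ, hμ⟩ := exists_tendsto_empiricalMeasure T x U
  exact ⟨μ, isProbabilityMeasure_of_tendsto_empiricalMeasure hU hμ,
    map_eq_of_tendsto_empiricalMeasure hT hU hμ,
    tendsto_birkhoffAverage_of_tendsto_empiricalMeasure hμ⟩

theorem exists_invariant_measure_integral_nonneg_general
    {X : Type*} [MetricSpace X] [CompactSpace X]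
    [MeasurableSpace X] [BorelSpace X]
    (T : X → X) (hT : Continuous T) (g : X → ℝ) (hg : Continuous g) (x : X)
    (h : 0 ≤ limsup (fun n : ℕ =>
      (1 / (n : ℝ)) * ∑ i ∈ Finset.range n, g (T^[i] x)) atTop) :
    ∃ μ : Measure X, IsProbabilityMeasure μ ∧ Measure.map T μ = μ ∧ 0 ≤ ∫ y, g y ∂μ := by
  let gb : X →ᵇ ℝ := .mkOfCompact ⟨g, hg⟩
  set u := fun n ↦ birkhoffAverage ℝ T g n x
  have hu : (fun n : ℕ ↦ (1 / (n : ℝ)) * ∑ i ∈ Finset.range n, g (T^[i] x)) = u := by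
    ext n; simp [u, birkhoffAverage, birkhoffSum]
  have hbdd : ∀ n, |u n| ≤ ‖gb‖ := fun n ↦ norm_birkhoffAverage_le gb.norm_coe_le_norm n x
  have hcluster : MapClusterPt (limsup u atTop) atTop u :=
    .limsup (isBoundedUnder_of ⟨-‖gb‖, fun n ↦ (abs_le.1 (hbdd n)).1⟩).isCoboundedUnder_le
      (isBoundedUnder_of ⟨‖gb‖, fun n ↦ (abs_le.1 (hbdd n)).2⟩)
  obtain ⟨U, hU, hUu⟩ := mapClusterPt_iff_ultrafilter.1 hcluster
  obtain ⟨μ, hμ, hμT, hμlim⟩ := exists_invariant_measure_tendsto_birkhoffAverage hT x hU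
  have hintegral : ∫ y, g y ∂μ = limsup u atTop := tendsto_nhds_unique (hμlim gb) hUu
  rw [hu] at h
  exact ⟨μ, hμ, hμT, hintegral ▸ h⟩

/-- Let `X` be a nonempty compact metric space, `T : X → X` continuous, `g : X → ℝ`
continuous and `x ∈ X`. If `limsup_{n → ∞} (1/n) ∑_{i=0}^{n-1} g(Tⁱ x) ≥ 0`, then there is a
`T`-invariant Borel probability measure `μ` on `X` with `∫ g dμ ≥ 0`. -/
theorem exists_invariant_measure_integral_nonneg
    {X : Type*} [MetricSpace X] [CompactSpace X] [Nonempty X]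
    [MeasurableSpace X] [BorelSpace X]
    (T : X → X) (hT : Continuous T) (g : X → ℝ) (hg : Continuous g) (x : X)
    (h : 0 ≤ limsup (fun n : ℕ =>
      (1 / (n : ℝ)) * ∑ i ∈ Finset.range n, g (T^[i] x)) atTop) :
    ∃ μ : Measure X, IsProbabilityMeasure μ ∧ Measure.map T μ = μ ∧ 0 ≤ ∫ y, g y ∂μ :=
  exists_invariant_measure_integral_nonneg_general T hT g hg x h
end
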